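/- arXiv:2004.11998 — 2 statements merged into one kernel-verified Lean document; each statement's English description precedes it below -/
import Mathlib

section
/- Let 𝔽_q be a finite field with q elements, k ≥ 2, n = q^k − 1, and let 𝒞 ⊆ 𝔽_q^n be a dual Hamming code, i.e., the cyclic code generated by g(x) = (x^n−1)/g⊥(x) for a primitive monic irreducible g⊥ of degree k. Fix any linear order on 𝔽_q (used to define cdes). Then every nonzero codeword w ∈ 𝒞 satisfies 2·cdes(w) = (q−1)·q^{k−1}. -/
/-- The (leftward) cyclic shift on words of length `n`:
`c(w₁,…,wₙ) = (w₂,…,wₙ,w₁)`. -/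
def cshift {A : Type*} {n : ℕ} (w : Fin n → A) : Fin n → A :=
  fun i => w ⟨((i : ℕ) + 1) % n, Nat.mod_lt _ i.pos⟩

/-- The major index of a word: `maj w = Σ_{1 ≤ i ≤ n-1, w_i > w_{i+1}} i`
(here positions are 0-indexed, so position `i : Fin n` is the `(i+1)`-st letter). -/
def majIdx {A : Type*} [LinearOrder A] {n : ℕ} (w : Fin n → A) : ℕ :=
  ∑ i : Fin n,
    if h : (i : ℕ) + 1 < n then (if w ⟨(i : ℕ) + 1, h⟩ < w i then (i : ℕ) + 1 else 0) else 0

/-- The number of cyclic descents of a word, `cdes w = #{i : w_i > w_{i+1}}`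
with indices read cyclically (`w_{n+1} := w_1`). -/
def cdes {A : Type*} [LinearOrder A] {n : ℕ} (w : Fin n → A) : ℕ :=
  (Finset.univ.filter fun i : Fin n =>
    w ⟨((i : ℕ) + 1) % n, Nat.mod_lt _ i.pos⟩ < w i).card

/-- The inversion number of a word: `inv w = #{(i,j) : i < j, w_i > w_j}`. -/
def invNum {A : Type*} [LinearOrder A] {n : ℕ} (w : Fin n → A) : ℕ :=
  (Finset.univ.filter fun p : Fin n × Fin n => p.1 < p.2 ∧ w p.2 < w p.1).card

/-- The Hamming weight of a binary word: the number of ones. -/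
def wt {n : ℕ} (w : Fin n → Bool) : ℕ :=
  (Finset.univ.filter fun i => w i = true).card

/-- The triple `(X, Σ_{x ∈ X} t^{stat x}, C)` exhibits the cyclic sieving phenomenon,
where `C` is the cyclic group of order `n` generated by the cyclic shift `c` acting on `X`:
for every `d`, the number of fixed points of `c^d` on `X` equals the evaluation of
`Σ_{x ∈ X} t^{stat x}` at `t = ζ^d`, with `ζ = exp(2πi/n)`. -/
def exhibitsCSP {A : Type*} [DecidableEq A] {n : ℕ} (X : Finset (Fin n → A))
    (stat : (Fin n → A) → ℕ) : Prop :=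
  ∀ d : ℕ,
    ((X.filter fun v => cshift^[d] v = v).card : ℂ) =
      ∑ v ∈ X, Complex.exp (2 * (Real.pi : ℂ) * Complex.I / n) ^ (d * stat v)

/-- The polynomial `w₁ + w₂ x + ⋯ + wₙ x^{n-1}` associated to a word `w ∈ F^n` under
the standard identification of `F^n` with `F[x]/(xⁿ-1)`.  A word `w` belongs to the
cyclic code generated by a monic divisor `g` of `xⁿ - 1` exactly when `g ∣ wordPoly w`. -/
noncomputable def wordPoly {F : Type*} [CommRing F] {n : ℕ} (w : Fin n → F) :
    Polynomial F :=
  ∑ i : Fin n, Polynomial.C (w i) * Polynomial.X ^ (i : ℕ)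

/-
Codewords are the words of `g·f mod (xⁿ - 1)`, so the code is the image of the field
`K = 𝔽_q[x]/(g⊥)`, with `q^k` elements, under a linear map `Φ` turning multiplication by
`γ = x⁻¹` into the cyclic shift. For `w = Φ c` with `c ≠ 0` this gives `w_m = L(γ^m c)`, where `L`
is the first coordinate; as `γ` generates `K^×`, `cdes w` is the number of `β ∈ K` with
`L(γβ) < L β`. Since `L ≠ 0` and `γ ∉ 𝔽_q`, `β ↦ (L β, L(γβ))` maps `K` onto `𝔽_q²`, so each of the
`q(q-1)/2` pairs `(a, b)` with `b < a` has `q^{k-2}` preimages.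
-/

open Polynomial Finset

lemma iterate_cshift_apply {A : Type*} {n : ℕ} (w : Fin n → A) (m : ℕ) (i : Fin n) :
    cshift^[m] w i = w ⟨(i + m) % n, Nat.mod_lt _ i.pos⟩ := by
  induction m generalizing w with
  | zero => simp [Nat.mod_eq_of_lt i.2]
  | succ m ih =>
    rw [Function.iterate_succ_apply, ih]
    simp only [cshift, Nat.mod_add_mod]
    congr 2

lemma exists_pow_mul_eq {K : Type*} [Field K] [Fintype K] {γ : K}
    (hγ : orderOf γ = Fintype.card K - 1) {c β : K} (hc : c ≠ 0) (hβ : β ≠ 0) :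
    ∃ m < orderOf γ, γ ^ m * c = β := by
  classical
  have hinj : Set.InjOn (fun m => γ ^ m * c) (Set.Iio (orderOf γ)) := fun a ha b hb hab =>
    pow_injOn_Iio_orderOf ha hb (mul_right_cancel₀ hc hab)
  have hγ0 : γ ≠ 0 := by
    rintro rfl
    rw [orderOf_eq_zero_iff'.2 fun m hm => by simp [hm.ne']] at hγ
    have : 1 < Fintype.card K := Fintype.one_lt_card
    omega
  -- an injective map from `|K| - 1` exponents into `K ∖ {0}` is onto it
  have himage : (range (orderOf γ)).image (fun m => γ ^ m * c) = univ.erase 0 := by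
    refine eq_of_subset_of_card_le (fun x hx => ?_) ?_
    · obtain ⟨m, -, rfl⟩ := mem_image.1 hx
      exact mem_erase.2 ⟨mul_ne_zero (pow_ne_zero _ hγ0) hc, mem_univ _⟩
    · rw [card_image_of_injOn (by simpa using hinj), card_range, card_erase_of_mem (mem_univ _),
        card_univ, hγ]
  obtain ⟨m, hm, rfl⟩ := mem_image.1 (himage ▸ mem_erase.2 ⟨hβ, mem_univ β⟩)
  exact ⟨m, mem_range.1 hm, rfl⟩

lemma cdes_eq_card_filter_lt {K A : Type*} [Field K] [Fintype K] [LinearOrder A] {n : ℕ}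
    {γ : K} (hγ : orderOf γ = n) (hn : n = Fintype.card K - 1) (L : K → A) {c : K}
    (hc : c ≠ 0) (w : Fin n → A) (hw : ∀ (m : ℕ) (hm : m < n), w ⟨m, hm⟩ = L (γ ^ m * c)) :
    cdes w = #{β | L (γ * β) < L β} := by
  have hnext : ∀ m (hm : m < n),
      w ⟨(m + 1) % n, Nat.mod_lt _ (by omega)⟩ = L (γ * (γ ^ m * c)) := by
    intro m hm
    rw [hw, ← mul_assoc, ← pow_succ', ← hγ, pow_mod_orderOf]
  unfold cdes
  refine card_nbij (fun i => γ ^ (i : ℕ) * c) (fun i hi => ?_) (fun i _ j _ hij => ?_)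
    (fun β hβ => ?_)
  · simpa [hw i i.2, hnext i i.2] using hi
  · refine Fin.ext (pow_injOn_Iio_orderOf (x := γ) ?_ ?_ (mul_right_cancel₀ hc hij)) <;>
      simp [hγ]
  · have hβ' : L (γ * β) < L β := (mem_filter.1 hβ).2
    have hβ0 : β ≠ 0 := by
      rintro rfl
      simp at hβ'
    obtain ⟨m, hm, rfl⟩ := exists_pow_mul_eq (hγ.trans hn) hc hβ0
    rw [hγ] at hm
    refine ⟨⟨m, hm⟩, mem_filter.2 ⟨mem_univ _, ?_⟩, rfl⟩
    simpa [hw m hm, hnext m hm] using hβ'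

lemma card_filter_mem_mul_card {G H : Type*} [AddGroup G] [AddGroup H] [Fintype G] [Fintype H]
    [DecidableEq H] (f : G →+ H) (hf : Function.Surjective f) (T : Finset H) :
    #{x | f x ∈ T} * Fintype.card H = #T * Fintype.card G := by
  have hfiber : ∀ y, #{x | f x = y} = #{x | f x = 0} := fun y =>
    AddMonoidHom.card_fiber_eq_of_mem_range f (hf y) (hf 0)
  have hG : Fintype.card G = Fintype.card H * #{x | f x = 0} := by
    rw [← card_univ, card_eq_sum_card_fiberwise (f := f) (t := univ) (fun _ _ => mem_univ _)]
    simp [hfiber]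
  have hT : #{x | f x ∈ T} = ∑ t ∈ T, #{x | f x = t} := by
    rw [card_eq_sum_card_fiberwise (s := {x | f x ∈ T}) (t := T) (fun x hx => by simpa using hx)]
    refine sum_congr rfl fun t ht => congrArg card (ext fun x => ?_)
    simp only [mem_filter, mem_univ, true_and]
    exact ⟨And.right, fun h => ⟨h ▸ ht, h⟩⟩
  rw [hT, sum_congr rfl fun t _ => hfiber t, sum_const, smul_eq_mul, hG]
  ring

lemma two_mul_card_filter_lt {A : Type*} [LinearOrder A] [Fintype A] :
    2 * #{p : A × A | p.2 < p.1} = Fintype.card A * Fintype.card A - Fintype.card A := by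
  have hswap : #{p : A × A | p.1 < p.2} = #{p : A × A | p.2 < p.1} :=
    card_equiv (Equiv.prodComm A A) (by simp)
  have hoff : (univ : Finset A).offDiag =
      ({p : A × A | p.2 < p.1} : Finset _) ∪ ({p : A × A | p.1 < p.2} : Finset _) := by
    ext p
    simp [lt_or_lt_iff_ne, eq_comm]
  have := offDiag_card (univ : Finset A)
  rw [hoff, card_union_of_disjoint (disjoint_filter.2 fun p _ h => h.not_gt), hswap,
    card_univ] at this
  omega

lemma surjective_prod_comp_mulLeft {F K : Type*} [Field F] [Field K] [Algebra F K]
    {L : K →ₗ[F] F} (hL : L ≠ 0) {γ : K} (hγ : γ ∉ Set.range (algebraMap F K)) :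
    Function.Surjective (L.prod (L ∘ₗ LinearMap.mulLeft F γ)) := by
  rw [← LinearMap.range_eq_top]
  by_contra hM
  obtain ⟨φ, hφ0, hφ⟩ := Submodule.exists_le_ker_of_lt_top _ (lt_top_iff_ne_top.2 hM)
  set a := φ (1, 0)
  set b := φ (0, 1)
  have hφ_apply : ∀ x y, φ (x, y) = x * a + y * b := fun x y => by
    rw [show ((x, y) : F × F) = x • (1, 0) + y • (0, 1) by simp, map_add, map_smul, map_smul,
      smul_eq_mul, smul_eq_mul]
  have hL_smul : ∀ (x : F) (β : K), L (algebraMap F K x * β) = x * L β := fun x β => by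
    rw [← Algebra.smul_def, map_smul, smul_eq_mul]
  -- `φ` vanishing on the range says that `L` kills the ideal generated by `a + bγ`.
  have hker : ∀ β, L ((algebraMap F K a + algebraMap F K b * γ) * β) = 0 := fun β => by
    have h := hφ (LinearMap.mem_range_self _ β)
    rw [LinearMap.mem_ker, LinearMap.prod_apply] at h
    rw [add_mul, mul_assoc, map_add, hL_smul, hL_smul]
    simpa [hφ_apply, mul_comm] using h
  by_cases hδ : algebraMap F K a + algebraMap F K b * γ = 0
  · have hb : b ≠ 0 := fun hb => hφ0 (LinearMap.ext fun p => by
      have ha : a = 0 := by simpa [hb] using hδ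
      rw [← Prod.mk.eta (p := p), hφ_apply, ha, hb]
      simp)
    refine hγ ⟨-a / b, ?_⟩
    rw [map_div₀, map_neg, div_eq_iff (by simpa using hb)]
    linear_combination -hδ
  · exact hL (LinearMap.ext fun β => by
      simpa [hδ] using hker ((algebraMap F K a + algebraMap F K b * γ)⁻¹ * β))

lemma notMem_range_algebraMap_of_orderOf_eq {F K : Type*} [Field F] [Fintype F] [Field K]
    [Fintype K] [Algebra F K] {γ : K} (hγ : orderOf γ = Fintype.card K - 1)
    (hFK : Fintype.card F < Fintype.card K) : γ ∉ Set.range (algebraMap F K) := by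
  rintro ⟨a, rfl⟩
  have hF := Fintype.one_lt_card (α := F)
  have ha : a ≠ 0 := by
    rintro rfl
    rw [map_zero, orderOf_eq_zero_iff'.2 fun m hm => by simp [hm.ne']] at hγ
    omega
  have hpow : algebraMap F K a ^ (Fintype.card F - 1) = 1 := by
    rw [← map_pow, FiniteField.pow_card_sub_one_eq_one a ha, map_one]
  have := orderOf_le_of_pow_eq_one (by omega) hpow
  omega

section CyclicCode

variable {F K : Type*} [Field F] [Fintype F] [LinearOrder F] [Field K] [Fintype K] [Algebra F K]
  {n : ℕ} {γ : K} (hγ : orderOf γ = n) (hn : n = Fintype.card K - 1)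
  (hFK : Fintype.card F < Fintype.card K) (Φ : K →ₗ[F] Fin n → F)
  (hΦ : ∀ β, Φ (γ * β) = cshift (Φ β))
include hγ hn hFK hΦ

lemma cdes_mul_card_mul_card {c : K} (hc : Φ c ≠ 0) :
    cdes (Φ c) * (Fintype.card F * Fintype.card F) =
      #{p : F × F | p.2 < p.1} * Fintype.card K := by
  have hn0 : 0 < n := by have := Fintype.one_lt_card (α := F); omega
  set L := LinearMap.proj (R := F) (φ := fun _ : Fin n => F) ⟨0, hn0⟩ ∘ₗ Φ
  have hiter : ∀ m, Φ (γ ^ m * c) = cshift^[m] (Φ c) := by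
    intro m
    induction m with
    | zero => simp
    | succ m ih => rw [pow_succ', mul_assoc, hΦ, ih, Function.iterate_succ_apply']
  have hw : ∀ m (hm : m < n), Φ c ⟨m, hm⟩ = L (γ ^ m * c) := fun m hm => by
    simp [L, hiter, iterate_cshift_apply, Nat.mod_eq_of_lt hm]
  have hL : L ≠ 0 := fun hL0 => hc (funext fun i => by simpa [hL0] using hw i i.2)
  have hsurj := surjective_prod_comp_mulLeft hL
    (notMem_range_algebraMap_of_orderOf_eq (hγ.trans hn) hFK)
  rw [cdes_eq_card_filter_lt hγ hn L (fun h0 => hc (by rw [h0, map_zero])) _ hw]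
  simpa using card_filter_mem_mul_card (L.prod (L ∘ₗ LinearMap.mulLeft F γ)).toAddMonoidHom
    hsurj {p : F × F | p.2 < p.1}

lemma two_mul_cdes_mul_card {c : K} (hc : Φ c ≠ 0) :
    2 * cdes (Φ c) * Fintype.card F = (Fintype.card F - 1) * Fintype.card K := by
  set q := Fintype.card F
  have hq : 0 < q := Fintype.card_pos
  refine Nat.eq_of_mul_eq_mul_right hq ?_
  calc 2 * cdes (Φ c) * q * q = 2 * (cdes (Φ c) * (q * q)) := by ring
    _ = (q * q - q) * Fintype.card K := by
      rw [cdes_mul_card_mul_card hγ hn hFK Φ hΦ hc, ← mul_assoc, two_mul_card_filter_lt]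
    _ = (q - 1) * Fintype.card K * q := by rw [← Nat.sub_one_mul]; ring

end CyclicCode

lemma degree_X_pow_sub_one {R : Type*} [CommRing R] [Nontrivial R] {n : ℕ} (hn : 0 < n) :
    (X ^ n - 1 : R[X]).degree = n := by
  rw [← C_1, degree_X_pow_sub_C hn]

lemma monic_X_pow_sub_one {R : Type*} [CommRing R] [Nontrivial R] {n : ℕ} (hn : n ≠ 0) :
    (X ^ n - 1 : R[X]).Monic := by
  simpa using monic_X_pow_sub_C (1 : R) hn

lemma mul_modByMonic_mul_left {R : Type*} [CommRing R] [Nontrivial R] {g M : R[X]}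
    (hg : g.Monic) (hM : M.Monic) (S : R[X]) : (g * S) %ₘ (g * M) = g * (S %ₘ M) := by
  rw [modByMonic_eq_of_dvd_sub (hg.mul hM) (q := g * M) (p₂ := g * (S %ₘ M)),
    (modByMonic_eq_self_iff (hg.mul hM)).2]
  · rw [hg.degree_mul_comm, hg.degree_mul_comm, hg.degree_mul, hg.degree_mul]
    exact WithBot.add_lt_add_right (by simp [hg.ne_zero]) (degree_modByMonic_lt S hM)
  · exact ⟨S /ₘ M, by linear_combination (-g) * modByMonic_add_div S M⟩

lemma coeff_X_pow_pred_mul_modByMonic {R : Type*} [CommRing R] [Nontrivial R] {n : ℕ}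
    (hn : 0 < n) {P : R[X]} (hP : P.degree < n) {j : ℕ} (hj : j < n) :
    ((X ^ (n - 1) * P) %ₘ (X ^ n - 1)).coeff j = P.coeff ((j + 1) % n) := by
  obtain ⟨m, rfl⟩ : ∃ m, n = m + 1 := ⟨n - 1, by omega⟩
  -- `X^m P = (X^{m+1} - 1) · divX P + (divX P + P₀ X^m)`, the last summand of degree `≤ m`.
  have hrem : (X ^ m * P) %ₘ (X ^ (m + 1) - 1) = P.divX + C (P.coeff 0) * X ^ m := by
    refine (div_modByMonic_unique P.divX _ (monic_X_pow_sub_one (n := m + 1) (by omega))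
      ⟨?_, ?_⟩).2
    · linear_combination (X : R[X]) ^ m * X_mul_divX_add P
    · rw [degree_X_pow_sub_one (by omega : 0 < m + 1)]
      refine (degree_add_le _ _).trans_lt (max_lt ?_ ((degree_C_mul_X_pow_le _ _).trans_lt ?_))
      · rcases eq_or_ne P 0 with rfl | h0
        · simp
        · exact (degree_divX_lt h0).trans hP
      · exact_mod_cast m.lt_succ_self
  rw [Nat.add_sub_cancel, hrem, coeff_add, coeff_divX, coeff_C_mul, coeff_X_pow]
  rcases eq_or_ne j m with rfl | hjm
  · rw [Nat.mod_self, coeff_eq_zero_of_degree_lt hP]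
    simp
  · rw [Nat.mod_eq_of_lt (by omega), if_neg hjm]
    simp

lemma wordPoly_coeff {R : Type*} [CommRing R] {n : ℕ} (w : Fin n → R) (i : Fin n) :
    (wordPoly w).coeff i = w i := by
  simp [wordPoly, coeff_X_pow, Fin.val_eq_val]

lemma degree_wordPoly_lt {R : Type*} [CommRing R] {n : ℕ} (w : Fin n → R) :
    (wordPoly w).degree < n :=
  (degree_sum_le _ _).trans_lt <| (Finset.sup_lt_iff (WithBot.bot_lt_coe n)).2 fun i _ =>
    (degree_C_mul_X_pow_le _ _).trans_lt (WithBot.coe_lt_coe.2 i.2)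

lemma card_adjoinRoot {R : Type*} [CommRing R] [Fintype R] {f : R[X]} (hf : f.Monic)
    [Fintype (AdjoinRoot f)] : Fintype.card (AdjoinRoot f) = Fintype.card R ^ f.natDegree := by
  rw [Module.card_fintype (AdjoinRoot.powerBasis' hf).basis, Fintype.card_fin,
    AdjoinRoot.powerBasis'_dim]

section Codeword

variable {F : Type*} [Field F] {n : ℕ} {g gperp : F[X]}

/-- Sends `f mod g⊥` to the word of `g · f mod (xⁿ - 1)`, computed as `g · (f mod g⊥)`. -/
noncomputable def codeword (g : F[X]) (hmonic : gperp.Monic) (n : ℕ) :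
    AdjoinRoot gperp →ₗ[F] Fin n → F :=
  LinearMap.pi (fun i : Fin n => lcoeff F i) ∘ₗ LinearMap.mulLeft F g ∘ₗ
    AdjoinRoot.modByMonicHom hmonic

variable (hmonic : gperp.Monic) (hg : g * gperp = X ^ n - 1)
include hg

lemma codeword_mk_apply (f : F[X]) (i : Fin n) :
    codeword g hmonic n (AdjoinRoot.mk gperp f) i = ((g * f) %ₘ (X ^ n - 1)).coeff i := by
  have hgm : g.Monic := hmonic.of_mul_monic_right (hg ▸ monic_X_pow_sub_one i.pos.ne')
  simp [codeword, AdjoinRoot.modByMonicHom_mk, ← hg, mul_modByMonic_mul_left hgm hmonic]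

lemma exists_codeword_eq {w : Fin n → F} (hw : g ∣ wordPoly w) :
    ∃ c, codeword g hmonic n c = w := by
  obtain ⟨h, hh⟩ := hw
  refine ⟨AdjoinRoot.mk gperp h, funext fun i => ?_⟩
  have hdeg : (wordPoly w).degree < (X ^ n - 1 : F[X]).degree :=
    degree_X_pow_sub_one (R := F) i.pos ▸ degree_wordPoly_lt w
  rw [codeword_mk_apply hmonic hg, ← hh,
    (modByMonic_eq_self_iff (monic_X_pow_sub_one i.pos.ne')).2 hdeg, wordPoly_coeff]

lemma codeword_root_pow_pred_mul (β : AdjoinRoot gperp) :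
    codeword g hmonic n (AdjoinRoot.root gperp ^ (n - 1) * β) =
      cshift (codeword g hmonic n β) := by
  obtain ⟨f, rfl⟩ := AdjoinRoot.mk_surjective β
  funext i
  have hXn : (X ^ n - 1 : F[X]).Monic := monic_X_pow_sub_one i.pos.ne'
  have hreduce : (g * (X ^ (n - 1) * f)) %ₘ (X ^ n - 1) =
      (X ^ (n - 1) * ((g * f) %ₘ (X ^ n - 1))) %ₘ (X ^ n - 1) := by
    refine modByMonic_eq_of_dvd_sub hXn ?_
    convert dvd_neg.2 ((dvd_modByMonic_sub (g * f) (X ^ n - 1)).mul_left (X ^ (n - 1))) using 1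
    ring
  rw [← AdjoinRoot.mk_X, ← map_pow, ← map_mul, codeword_mk_apply hmonic hg, hreduce,
    coeff_X_pow_pred_mul_modByMonic i.pos _ i.2]
  · simp only [cshift, codeword_mk_apply hmonic hg]
  · exact degree_X_pow_sub_one (R := F) i.pos ▸ degree_modByMonic_lt _ hXn

end Codeword

/-- every nonzero codeword w of a dual Hamming code of dimension k ≥ 2
and length n = q^k - 1 satisfies 2·cdes(w) = (q-1)·q^{k-1}, for any fixed linear order
on F_q. -/
theorem stmt16 {F : Type*} [Field F] [Fintype F] [LinearOrder F] (k : ℕ) (hk : 2 ≤ k)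
    (n : ℕ) (hn : n = Fintype.card F ^ k - 1)
    (gperp : Polynomial F) (hmonic : gperp.Monic) (hirr : Irreducible gperp)
    (hdeg : gperp.natDegree = k)
    (hprim : orderOf (AdjoinRoot.root gperp) = n)
    (g : Polynomial F) (hg : g * gperp = Polynomial.X ^ n - 1) :
    ∀ w : Fin n → F, g ∣ wordPoly w → w ≠ 0 →
      2 * cdes w = (Fintype.card F - 1) * Fintype.card F ^ (k - 1) := by
  intro w hw hw0
  have : Fact (Irreducible gperp) := ⟨hirr⟩
  let : Fintype (AdjoinRoot gperp) :=
    Module.fintypeOfFintype (AdjoinRoot.powerBasis' hmonic).basis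
  set q := Fintype.card F
  have hcard : Fintype.card (AdjoinRoot gperp) = q ^ k := by rw [card_adjoinRoot hmonic, hdeg]
  have hq : 1 < q := Fintype.one_lt_card
  have hqk : q < q ^ k := lt_self_pow₀ hq (by omega)
  set γ := (AdjoinRoot.root gperp)⁻¹
  have hγ : orderOf γ = n :=
    (orderOf_eq_orderOf_iff.2 fun m => by rw [inv_pow, inv_eq_one]).trans hprim
  have hγroot : AdjoinRoot.root gperp ^ (n - 1) = γ := eq_inv_of_mul_eq_one_left <| by
    rw [← pow_succ, Nat.sub_add_cancel (show 1 ≤ n by omega), ← hprim, pow_orderOf_eq_one]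
  obtain ⟨c, rfl⟩ := exists_codeword_eq hmonic hg hw
  have key := two_mul_cdes_mul_card hγ (by rw [hcard, hn]) (by rwa [hcard])
    (codeword g hmonic n) (hγroot ▸ codeword_root_pow_pred_mul hmonic hg) hw0
  rw [hcard, ← Nat.sub_add_cancel (by omega : 1 ≤ k), pow_succ, ← mul_assoc] at key
  exact Nat.eq_of_mul_eq_mul_right Fintype.card_pos key
end

section
/- Let q = 2, k ≥ 1, n = 2^k − 1, and let X = 𝒞 ⊆ 𝔽_2^n be a binary dual Hamming code, i.e., the cyclic code generated by g(x) = (x^n−1)/g⊥(x) for a primitive monic irreducible g⊥ ∈ 𝔽_2[x] of degree k. Then (X, X^inv(t), C) exhibits the cyclic sieving phenomenon, where inv is defined using the order 0 < 1 on 𝔽_2 and C is the cyclic group of order n acting on X by cyclic shifts. -/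
/-- The inversion number of a word over F_2 = {0,1} with the order 0 < 1:
inv(w) = #{(i,j) : i < j, w_i = 1 and w_j = 0}. -/
def invF2 {n : ℕ} (w : Fin n → ZMod 2) : ℕ :=
  (Finset.univ.filter fun p : Fin n × Fin n =>
    p.1 < p.2 ∧ w p.1 = 1 ∧ w p.2 = 0).card

/-!
The nonzero codewords form a single free orbit of the cyclic shift `c`: the shifts `cʲ w`
(`j < n`) of the generator word `w = g` are pairwise distinct because `x` has order `n` modulo
`g⊥`, and together with `0` they already account for all `2ᵏ` codewords. Moving the first letter
of a binary word to the end changes `inv` by `wt` modulo `n`, so `inv (cʲ w) ≡ inv w + j · wt w`.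
Every coordinate equals `1` on exactly half of the code, which forces `2 · wt w = n + 1`; thus
`wt w` is a unit modulo `n`, and on the orbit `Σ ζ^(d · inv)` is a full geometric sum in
`ζ^(d · wt w)`: it equals `n` or `0` according as `n ∣ d`, which is the number of fixed points
of `c^d` on the orbit.
-/

open Finset Polynomial

section Shift

variable {A : Type*} {n : ℕ}

lemma cshift_iterate_apply (j : ℕ) (v : Fin n → A) (i : Fin n) :
    cshift^[j] v i = v ⟨((i : ℕ) + j) % n, Nat.mod_lt _ i.pos⟩ := by
  induction j generalizing v with
  | zero => simp [Nat.mod_eq_of_lt i.isLt]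
  | succ j ih =>
    rw [Function.iterate_succ_apply, ih]
    simp only [cshift, Nat.mod_add_mod, add_assoc]

lemma cshift_iterate_mod (d : ℕ) (v : Fin n → A) : cshift^[d % n] v = cshift^[d] v := by
  ext i
  simp only [cshift_iterate_apply, Nat.add_mod_mod]

lemma cshift_iterate_eq_self_of_dvd {d : ℕ} (hd : n ∣ d) (v : Fin n → A) :
    cshift^[d] v = v := by
  rw [← cshift_iterate_mod, Nat.mod_eq_zero_of_dvd hd, Function.iterate_zero_apply]

lemma cshift_eq_snoc_tail {m : ℕ} (v : Fin (m + 1) → A) :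
    cshift v = Fin.snoc (Fin.tail v) (v 0) := by
  ext i
  refine Fin.lastCases ?_ (fun j => ?_) i
  · simp [cshift]
  · simp [cshift, Fin.tail, Nat.mod_eq_of_lt (Nat.succ_lt_succ j.isLt)]
    rfl

lemma cshift_injective : Function.Injective (cshift : (Fin n → A) → Fin n → A) := by
  rcases n with _ | m
  · exact fun v w _ => Subsingleton.elim v w
  · refine Function.LeftInverse.injective (g := cshift^[m]) fun v => ?_
    rw [← Function.iterate_succ_apply, cshift_iterate_eq_self_of_dvd dvd_rfl]

lemma cshift_iterate_orbit_eq_self_iff (hn : 0 < n) {w : Fin n → A}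
    (hinj : Set.InjOn (fun j => cshift^[j] w) (Set.Iio n)) (j d : ℕ) :
    cshift^[d] (cshift^[j] w) = cshift^[j] w ↔ n ∣ d := by
  refine ⟨fun h => ?_, fun h => cshift_iterate_eq_self_of_dvd h _⟩
  have hw : cshift^[d % n] w = cshift^[0] w := by
    rw [cshift_iterate_mod, Function.iterate_zero_apply]
    apply cshift_injective.iterate j
    rwa [← Function.iterate_add_apply, add_comm, Function.iterate_add_apply]
  exact Nat.dvd_of_mod_eq_zero (hinj (Nat.mod_lt d hn) hn hw)

variable [Zero A] [DecidableEq A]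

lemma zero_notMem_image_cshift_iterate {w : Fin n → A} (hw : w ≠ 0) (s : Finset ℕ) :
    (0 : Fin n → A) ∉ s.image fun j => cshift^[j] w := by
  simp only [mem_image, not_exists, not_and]
  intro j _ h
  exact hw (cshift_injective.iterate j (h.trans (Function.iterate_fixed rfl j).symm))

lemma hammingNorm_cons {m : ℕ} (a : A) (u : Fin m → A) :
    hammingNorm (Fin.cons a u : Fin (m + 1) → A) = hammingNorm u + if a = 0 then 0 else 1 := by
  simp [hammingNorm, card_filter, Fin.sum_univ_succ, add_comm]

lemma hammingNorm_snoc {m : ℕ} (u : Fin m → A) (a : A) :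
    hammingNorm (Fin.snoc u a : Fin (m + 1) → A) = hammingNorm u + if a = 0 then 0 else 1 := by
  simp [hammingNorm, card_filter, Fin.sum_univ_castSucc]

lemma hammingNorm_cshift (v : Fin n → A) : hammingNorm (cshift v) = hammingNorm v := by
  rcases n with _ | m
  · simp [hammingNorm]
  have hv := hammingNorm_cons (v 0) (Fin.tail v)
  rw [Fin.cons_self_tail] at hv
  rw [cshift_eq_snoc_tail, hammingNorm_snoc, hv]

lemma hammingNorm_cshift_iterate (j : ℕ) (v : Fin n → A) :
    hammingNorm (cshift^[j] v) = hammingNorm v :=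
  congrFun (Function.iterate_invariant (f := cshift) (g := hammingNorm)
    (funext hammingNorm_cshift) j) v

end Shift

section WordPoly

variable {F : Type*} [CommRing F] {n : ℕ}

lemma wordPoly_cons {m : ℕ} (a : F) (u : Fin m → F) :
    wordPoly (Fin.cons a u : Fin (m + 1) → F) = C a + X * wordPoly u := by
  simp only [wordPoly, Fin.sum_univ_succ, Fin.cons_zero, Fin.cons_succ, Fin.val_zero,
    Fin.val_succ, pow_zero, mul_one, mul_sum]
  congr 1
  exact sum_congr rfl fun i _ => by ring

lemma wordPoly_snoc {m : ℕ} (u : Fin m → F) (a : F) :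
    wordPoly (Fin.snoc u a : Fin (m + 1) → F) = wordPoly u + C a * X ^ m := by
  simp [wordPoly, Fin.sum_univ_castSucc]

lemma X_mul_wordPoly_cshift {m : ℕ} (v : Fin (m + 1) → F) :
    X * wordPoly (cshift v) = wordPoly v + C (v 0) * (X ^ (m + 1) - 1) := by
  have hv := wordPoly_cons (v 0) (Fin.tail v)
  rw [Fin.cons_self_tail] at hv
  rw [cshift_eq_snoc_tail, wordPoly_snoc, hv]
  ring

lemma X_pow_mul_wordPoly_cshift_iterate_dvd (hn : 0 < n) (v : Fin n → F) (j : ℕ) :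
    X ^ n - 1 ∣ X ^ j * wordPoly (cshift^[j] v) - wordPoly v := by
  obtain ⟨m, rfl⟩ := Nat.exists_eq_add_one_of_ne_zero hn.ne'
  induction j with
  | zero => simp
  | succ j ih =>
    have key : X ^ (j + 1) * wordPoly (cshift^[j + 1] v) - wordPoly v =
        (X ^ j * wordPoly (cshift^[j] v) - wordPoly v) +
          (X ^ (m + 1) - 1) * (X ^ j * C (cshift^[j] v 0)) := by
      rw [Function.iterate_succ_apply', pow_succ, mul_assoc, X_mul_wordPoly_cshift]
      ring
    rw [key]
    exact dvd_add ih (dvd_mul_right _ _)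

lemma dvd_wordPoly_cshift (hn : 0 < n) {g : F[X]} (hg : g ∣ X ^ n - 1) {v : Fin n → F}
    (hv : g ∣ wordPoly v) : g ∣ wordPoly (cshift v) := by
  have h := X_pow_mul_wordPoly_cshift_iterate_dvd hn (cshift v) (n - 1)
  rw [← Function.iterate_succ_apply, Nat.succ_eq_add_one, Nat.sub_add_cancel hn,
    cshift_iterate_eq_self_of_dvd dvd_rfl] at h
  have := dvd_sub (dvd_mul_of_dvd_right hv (X ^ (n - 1))) (hg.trans h)
  rwa [sub_sub_cancel] at this

lemma coeff_wordPoly (v : Fin n → F) (i : ℕ) :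
    (wordPoly v).coeff i = if h : i < n then v ⟨i, h⟩ else 0 := by
  simp only [wordPoly, finsetSum_coeff, coeff_C_mul, coeff_X_pow, mul_ite, mul_one, mul_zero]
  split_ifs with h
  · rw [sum_eq_single ⟨i, h⟩ (fun j _ hj => if_neg fun hij => hj (Fin.ext hij.symm)) (by simp)]
    simp
  · exact sum_eq_zero fun j _ => if_neg fun hij : i = j => h (hij ▸ j.isLt)

lemma wordPoly_injective : Function.Injective (wordPoly : (Fin n → F) → F[X]) := by
  intro v w h
  ext i
  simpa [coeff_wordPoly] using congrArg (coeff · i) h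

lemma degree_wordPoly_lt_s19 (v : Fin n → F) : (wordPoly v).degree < n := by
  rw [degree_lt_iff_coeff_zero]
  intro i hi
  rw [coeff_wordPoly, dif_neg (by omega)]

lemma wordPoly_coeff_eq {p : F[X]} (hp : p.degree < n) :
    wordPoly (fun i : Fin n => p.coeff i) = p := by
  ext i
  rw [coeff_wordPoly]
  split_ifs with h
  · rfl
  · exact (coeff_eq_zero_of_degree_lt (hp.trans_le (by exact_mod_cast not_lt.1 h))).symm

lemma wordPoly_zero : wordPoly (0 : Fin n → F) = 0 := by
  simp [wordPoly]

lemma wordPoly_add (v w : Fin n → F) : wordPoly (v + w) = wordPoly v + wordPoly w := by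
  simp [wordPoly, sum_add_distrib, add_mul]

end WordPoly

section CyclicCode

variable {F : Type*} [Field F] {n : ℕ} {g gperp : F[X]}

lemma cshift_iterate_injOn_of_orderOf_root (hg : g * gperp = X ^ n - 1) (hg0 : g ≠ 0)
    {w : Fin n → F} (hw : wordPoly w = g) (hprim : orderOf (AdjoinRoot.root gperp) = n) :
    Set.InjOn (fun j => cshift^[j] w) (Set.Iio n) := by
  intro j₁ h₁ j₂ h₂ he
  have hn : 0 < n := (Nat.zero_le _).trans_lt h₁
  refine pow_injOn_Iio_orderOf (x := AdjoinRoot.root gperp) (hprim ▸ h₁) (hprim ▸ h₂) ?_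
  have d₁ := X_pow_mul_wordPoly_cshift_iterate_dvd hn w j₁
  have d₂ := X_pow_mul_wordPoly_cshift_iterate_dvd hn w j₂
  simp only at he
  rw [he, hw] at d₁
  rw [hw] at d₂
  have hdiff : g * gperp ∣ g * (X ^ j₁ - X ^ j₂) := by
    rw [hg]
    convert dvd_sub (d₁.mul_left (X ^ j₂)) (d₂.mul_left (X ^ j₁)) using 1
    ring
  simpa using AdjoinRoot.mk_eq_mk.2 ((mul_dvd_mul_iff_left hg0).1 hdiff)

lemma degree_lt_of_monic_mul_eq_wordPoly {q : F[X]} (hg : g.Monic) {k : ℕ}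
    (hdeg : g.natDegree + k = n) {v : Fin n → F} (h : g * q = wordPoly v) : q.degree < k := by
  by_cases hq : q = 0
  · rw [hq, degree_zero]; exact WithBot.bot_lt_coe k
  have hv0 : wordPoly v ≠ 0 := h ▸ mul_ne_zero hg.ne_zero hq
  have hlt := (natDegree_lt_iff_degree_lt hv0).2 (degree_wordPoly_lt_s19 v)
  rw [← h, hg.natDegree_mul' hq] at hlt
  exact (natDegree_lt_iff_degree_lt hq).1 (by omega)

lemma card_le_of_forall_dvd_wordPoly [Fintype F] (hg : g.Monic) {k : ℕ}
    (hdeg : g.natDegree + k = n) (S : Finset (Fin n → F)) (hS : ∀ v ∈ S, g ∣ wordPoly v) :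
    #S ≤ Fintype.card F ^ k := by
  have hmul : ∀ v ∈ S, g * (wordPoly v /ₘ g) = wordPoly v := fun v hv => by
    simpa [(modByMonic_eq_zero_iff_dvd hg).2 (hS v hv)] using modByMonic_add_div (wordPoly v) g
  have hinj : Set.InjOn (fun v (i : Fin k) => (wordPoly v /ₘ g).coeff i)
      (S : Set (Fin n → F)) := by
    intro v hv w hw hvw
    have hquot : wordPoly v /ₘ g = wordPoly w /ₘ g := by
      ext i
      by_cases hi : i < k
      · exact congrFun hvw ⟨i, hi⟩
      · have hik : (k : WithBot ℕ) ≤ i := by exact_mod_cast not_lt.1 hi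
        rw [coeff_eq_zero_of_degree_lt
            ((degree_lt_of_monic_mul_eq_wordPoly hg hdeg (hmul v hv)).trans_le hik),
          coeff_eq_zero_of_degree_lt
            ((degree_lt_of_monic_mul_eq_wordPoly hg hdeg (hmul w hw)).trans_le hik)]
    exact wordPoly_injective (by rw [← hmul v hv, ← hmul w hw, hquot])
  simpa using card_le_card_of_injOn _ (fun _ _ => mem_univ _) hinj

lemma monic_of_mul_eq_X_pow_sub_one (hn : 0 < n) (hmonic : gperp.Monic)
    (hg : g * gperp = X ^ n - 1) : g.Monic :=
  hmonic.of_mul_monic_right (hg ▸ monic_X_pow_sub_C 1 hn.ne')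

lemma natDegree_add_natDegree_of_mul_eq_X_pow_sub_one (hn : 0 < n) (hmonic : gperp.Monic)
    (hg : g * gperp = X ^ n - 1) : g.natDegree + gperp.natDegree = n := by
  rw [← (monic_of_mul_eq_X_pow_sub_one hn hmonic hg).natDegree_mul hmonic, hg]
  simpa using natDegree_X_pow_sub_C (n := n) (r := (1 : F))

lemma wordPoly_coeff_eq_of_mul_eq_X_pow_sub_one (hn : 0 < n) (hmonic : gperp.Monic)
    (hdeg : 0 < gperp.natDegree) (hg : g * gperp = X ^ n - 1) :
    wordPoly (fun i : Fin n => g.coeff i) = g := by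
  refine wordPoly_coeff_eq (degree_le_natDegree.trans_lt ?_)
  have := natDegree_add_natDegree_of_mul_eq_X_pow_sub_one hn hmonic hg
  exact_mod_cast (by omega : g.natDegree < n)

lemma eq_union_orbit_of_orderOf_root [Fintype F] [DecidableEq F] (hn : 0 < n)
    (hcard : Fintype.card F ^ gperp.natDegree = n + 1) (hmonic : gperp.Monic)
    (hprim : orderOf (AdjoinRoot.root gperp) = n) (hg : g * gperp = X ^ n - 1)
    {S : Finset (Fin n → F)} (hS : ∀ v, v ∈ S ↔ g ∣ wordPoly v) {w : Fin n → F}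
    (hw : wordPoly w = g) :
    S = {0} ∪ (range n).image fun j => cshift^[j] w := by
  have hgmonic := monic_of_mul_eq_X_pow_sub_one hn hmonic hg
  have hw0 : w ≠ 0 := fun h => hgmonic.ne_zero (by rw [← hw, h, wordPoly_zero])
  have hshift : Set.MapsTo cshift (S : Set (Fin n → F)) S := fun v hv =>
    (hS _).2 (dvd_wordPoly_cshift hn ⟨gperp, hg.symm⟩ ((hS v).1 hv))
  have hinj := cshift_iterate_injOn_of_orderOf_root hg hgmonic.ne_zero hw hprim
  refine (eq_of_subset_of_card_le ?_ ?_).symm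
  · refine union_subset (singleton_subset_iff.2 ((hS 0).2 (by simp [wordPoly_zero]))) ?_
    exact image_subset_iff.2 fun j _ => hshift.iterate j ((hS _).2 (by rw [hw]))
  · rw [card_union_of_disjoint
        (disjoint_singleton_left.2 (zero_notMem_image_cshift_iterate hw0 _)), card_singleton, card_image_of_injOn (by simpa [Set.InjOn] using hinj), card_range, add_comm,
      ← hcard]
    exact card_le_of_forall_dvd_wordPoly hgmonic
      (natDegree_add_natDegree_of_mul_eq_X_pow_sub_one hn hmonic hg) S fun v => (hS v).1

end CyclicCode

section Binary

variable {n m : ℕ}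

lemma ZMod.ne_zero_iff_eq_one (a : ZMod 2) : a ≠ 0 ↔ a = 1 := by
  revert a; decide

lemma invF2_eq_sum (v : Fin n → ZMod 2) :
    invF2 v = ∑ i, ∑ j, if i < j ∧ v i = 1 ∧ v j = 0 then 1 else 0 := by
  rw [invF2, card_filter, Fintype.sum_prod_type]

lemma hammingNorm_eq_sum (v : Fin n → ZMod 2) :
    hammingNorm v = ∑ i, if v i = 1 then 1 else 0 := by
  simp only [hammingNorm, card_filter, ZMod.ne_zero_iff_eq_one]

lemma card_filter_eq_zero_eq_sub_hammingNorm (v : Fin n → ZMod 2) :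
    #{i | v i = 0} = n - hammingNorm v := by
  have h := card_filter_add_card_filter_not (s := univ) (fun i => v i = 0)
  rw [card_univ, Fintype.card_fin] at h
  simp only [hammingNorm, ne_eq]
  omega

lemma invF2_cons (a : ZMod 2) (u : Fin m → ZMod 2) :
    invF2 (Fin.cons a u : Fin (m + 1) → ZMod 2) =
      invF2 u + if a = 1 then m - hammingNorm u else 0 := by
  simp only [invF2_eq_sum, Fin.sum_univ_succ, Fin.cons_zero, Fin.cons_succ, Fin.succ_lt_succ_iff,
    Fin.succ_pos, Fin.not_lt_zero, false_and, true_and, if_false, zero_add]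
  rw [add_comm]
  congr 1
  split_ifs with ha
  · simp only [ha, true_and, ← card_filter, card_filter_eq_zero_eq_sub_hammingNorm]
  · simp only [ha, false_and, if_false, sum_const_zero]

lemma invF2_snoc (u : Fin m → ZMod 2) (a : ZMod 2) :
    invF2 (Fin.snoc u a : Fin (m + 1) → ZMod 2) =
      invF2 u + if a = 0 then hammingNorm u else 0 := by
  have hlast (i : Fin m) : ¬ Fin.last m < i.castSucc := not_lt.2 (Fin.castSucc_lt_last i).le
  simp only [invF2_eq_sum, Fin.sum_univ_castSucc, Fin.snoc_castSucc, Fin.snoc_last,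
    Fin.castSucc_lt_castSucc_iff, Fin.castSucc_lt_last, hlast, lt_self_iff_false, false_and,
    true_and, if_false, sum_const_zero, add_zero, sum_add_distrib]
  congr 1
  split_ifs with ha
  · simp only [ha, and_true, hammingNorm_eq_sum]
  · simp only [ha, and_false, if_false, sum_const_zero]

lemma invF2_cshift_modEq (v : Fin n → ZMod 2) :
    invF2 (cshift v) ≡ invF2 v + hammingNorm v [MOD n] := by
  rcases n with _ | m
  · simp [invF2, hammingNorm, Nat.ModEq]
  have hinv := invF2_cons (v 0) (Fin.tail v)
  have hwt := hammingNorm_cons (v 0) (Fin.tail v)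
  rw [Fin.cons_self_tail] at hinv hwt
  rw [cshift_eq_snoc_tail, invF2_snoc, hinv, hwt]
  have hle : hammingNorm (Fin.tail v) ≤ m := (card_le_univ _).trans_eq (Fintype.card_fin m)
  by_cases h : v 0 = 0
  · simp only [h, if_true, zero_ne_one, if_false, add_zero]
    rfl
  · simp only [(ZMod.ne_zero_iff_eq_one _).1 h, if_true, one_ne_zero, if_false, add_zero]
    rw [show invF2 (Fin.tail v) + (m - hammingNorm (Fin.tail v)) + (hammingNorm (Fin.tail v) + 1)
      = invF2 (Fin.tail v) + (m + 1) by omega]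
    exact Nat.add_modEq_right.symm

lemma invF2_cshift_iterate_modEq (v : Fin n → ZMod 2) (j : ℕ) :
    invF2 (cshift^[j] v) ≡ invF2 v + j * hammingNorm v [MOD n] := by
  induction j with
  | zero => simp [Nat.ModEq.refl]
  | succ j ih =>
    rw [Function.iterate_succ_apply']
    calc invF2 (cshift (cshift^[j] v))
        ≡ invF2 (cshift^[j] v) + hammingNorm (cshift^[j] v) [MOD n] := invF2_cshift_modEq _
      _ = invF2 (cshift^[j] v) + hammingNorm v := by rw [hammingNorm_cshift_iterate]
      _ ≡ invF2 v + j * hammingNorm v + hammingNorm v [MOD n] := ih.add_right _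
      _ = invF2 v + (j + 1) * hammingNorm v := by ring

lemma two_mul_card_filter_apply_ne_zero {S : Finset (Fin n → ZMod 2)}
    (hadd : ∀ u ∈ S, ∀ v ∈ S, u + v ∈ S) {u : Fin n → ZMod 2} (hu : u ∈ S) {i : Fin n}
    (hui : u i ≠ 0) : 2 * #{v ∈ S | v i ≠ 0} = #S := by
  have hflip : ∀ a b : ZMod 2, b ≠ 0 → (a + b ≠ 0 ↔ a = 0) := by decide
  have hinv (v : Fin n → ZMod 2) : v + u + u = v := by
    rw [add_assoc, show u + u = 0 from funext fun j => CharTwo.add_self_eq_zero (u j), add_zero]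
  have hswap : #{v ∈ S | v i ≠ 0} = #{v ∈ S | ¬ v i ≠ 0} := by
    refine card_nbij' (· + u) (· + u) ?_ ?_ (fun v _ => hinv v) (fun v _ => hinv v) <;>
    · intro v hv
      simp only [coe_filter, Set.mem_ofPred_eq, Pi.add_apply] at hv ⊢
      exact ⟨hadd v hv.1 u hu, by simpa [hflip _ _ hui] using hv.2⟩
  rw [two_mul]
  nth_rw 2 [hswap]
  exact card_filter_add_card_filter_not _

lemma two_mul_sum_hammingNorm {S : Finset (Fin n → ZMod 2)}
    (hadd : ∀ u ∈ S, ∀ v ∈ S, u + v ∈ S) (hsupp : ∀ i, ∃ u ∈ S, u i ≠ 0) :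
    2 * ∑ v ∈ S, hammingNorm v = n * #S := by
  have hcol (i : Fin n) : 2 * #{v ∈ S | v i ≠ 0} = #S := by
    obtain ⟨u, hu, hui⟩ := hsupp i
    exact two_mul_card_filter_apply_ne_zero hadd hu hui
  simp only [hammingNorm, card_filter]
  rw [sum_comm, mul_sum]
  simp only [← card_filter, hcol, sum_const, card_univ, Fintype.card_fin, smul_eq_mul]

lemma two_mul_hammingNorm_of_eq_union_orbit (hn : 0 < n) {S : Finset (Fin n → ZMod 2)}
    (hadd : ∀ u ∈ S, ∀ v ∈ S, u + v ∈ S) {w : Fin n → ZMod 2} (hw : w ≠ 0)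
    (hinj : Set.InjOn (fun j => cshift^[j] w) (Set.Iio n))
    (hS : S = {0} ∪ (range n).image fun j => cshift^[j] w) :
    2 * hammingNorm w = n + 1 := by
  have hinj' : Set.InjOn (fun j => cshift^[j] w) (range n) := by simpa [Set.InjOn] using hinj
  have horbit (j : ℕ) : cshift^[j] w ∈ S := by
    rw [hS, ← cshift_iterate_mod]
    exact mem_union_right _ (mem_image_of_mem _ (mem_range.2 (Nat.mod_lt j hn)))
  have hsupp (i : Fin n) : ∃ u ∈ S, u i ≠ 0 := by
    obtain ⟨p, hp⟩ : ∃ p, w p ≠ 0 := Function.ne_iff.1 hw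
    refine ⟨_, horbit (p + n - i), ?_⟩
    rw [cshift_iterate_apply]
    convert hp using 2
    refine Fin.ext ?_
    dsimp only
    rw [show (i : ℕ) + (p + n - i) = p + n by omega, Nat.add_mod_right, Nat.mod_eq_of_lt p.isLt]
  have hsum := two_mul_sum_hammingNorm hadd hsupp
  have hdisj := disjoint_singleton_left.2 (zero_notMem_image_cshift_iterate hw (range n))
  rw [hS, sum_union hdisj, sum_image hinj', card_union_of_disjoint hdisj,
    card_image_of_injOn hinj'] at hsum
  simp only [sum_singleton, hammingNorm_zero, hammingNorm_cshift_iterate, sum_const, card_range,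
    smul_eq_mul, card_singleton, zero_add] at hsum
  exact Nat.eq_of_mul_eq_mul_left hn (by linarith)

end Binary

section CSP

variable {A : Type*} [DecidableEq A] {n : ℕ} {stat : (Fin n → A) → ℕ}

lemma exhibitsCSP_union {S T : Finset (Fin n → A)} (h : Disjoint S T)
    (hS : exhibitsCSP S stat) (hT : exhibitsCSP T stat) : exhibitsCSP (S ∪ T) stat := by
  intro d
  rw [filter_union, card_union_of_disjoint (disjoint_filter_filter h), sum_union h, Nat.cast_add,
    hS d, hT d]

lemma exhibitsCSP_singleton {z : Fin n → A} (hz : cshift z = z) (hstat : stat z = 0) :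
    exhibitsCSP {z} stat := by
  intro d
  rw [filter_singleton, if_pos (Function.iterate_fixed hz d)]
  simp [hstat]

lemma exhibitsCSP_orbit (hn : 0 < n) {w : Fin n → A} {s : ℕ}
    (hinj : Set.InjOn (fun j => cshift^[j] w) (Set.Iio n))
    (hstat : ∀ j, stat (cshift^[j] w) ≡ stat w + j * s [MOD n]) (hs : n.Coprime s) :
    exhibitsCSP ((range n).image fun j => cshift^[j] w) stat := by
  intro d
  set ζ := Complex.exp (2 * (Real.pi : ℂ) * Complex.I / n)
  have hζ : IsPrimitiveRoot ζ n := Complex.isPrimitiveRoot_exp n hn.ne'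
  have hpow {a b : ℕ} (h : a ≡ b [MOD n]) : ζ ^ a = ζ ^ b := by
    rw [← pow_mod_orderOf, ← hζ.eq_orderOf, h, hζ.eq_orderOf, pow_mod_orderOf]
  have hinj' : Set.InjOn (fun j => cshift^[j] w) (range n) := by simpa [Set.InjOn] using hinj
  have hterm (j : ℕ) :
      ζ ^ (d * stat (cshift^[j] w)) = ζ ^ (d * stat w) * (ζ ^ (d * s)) ^ j := by
    rw [hpow ((hstat j).mul_left d), ← pow_mul, ← pow_add]
    ring_nf
  rw [sum_image hinj', filter_image]
  simp only [cshift_iterate_orbit_eq_self_iff hn hinj, filter_const, hterm, ← mul_sum]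
  by_cases hd : n ∣ d
  · have hq : ζ ^ (d * s) = 1 := hζ.pow_eq_one_iff_dvd _ |>.2 (hd.mul_right s)
    have h1 : ζ ^ (d * stat w) = 1 := hζ.pow_eq_one_iff_dvd _ |>.2 (hd.mul_right _)
    simp [hd, hq, h1, card_image_of_injOn hinj']
  · have hq : ζ ^ (d * s) ≠ 1 := by
      rw [Ne, hζ.pow_eq_one_iff_dvd]
      exact fun h => hd (hs.dvd_of_dvd_mul_right h)
    have hqn : (ζ ^ (d * s)) ^ n = 1 := by
      rw [← pow_mul, mul_comm, pow_mul, hζ.pow_eq_one, one_pow]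
    simp [hd, geom_sum_eq hq, hqn]

end CSP

theorem stmt19_general (k : ℕ) (hk : 1 ≤ k) (n : ℕ) (hn : n = 2 ^ k - 1)
    (gperp : Polynomial (ZMod 2)) (hmonic : gperp.Monic)
    (hdeg : gperp.natDegree = k)
    (hprim : orderOf (AdjoinRoot.root gperp) = n)
    (g : Polynomial (ZMod 2)) (hg : g * gperp = Polynomial.X ^ n - 1)
    (X : Finset (Fin n → ZMod 2)) (hX : ∀ v : Fin n → ZMod 2, v ∈ X ↔ g ∣ wordPoly v) :
    exhibitsCSP X invF2 := by
  have hn0 : 0 < n := by have := Nat.one_lt_two_pow (n := k) (by omega); omega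
  have hcard : Fintype.card (ZMod 2) ^ gperp.natDegree = n + 1 := by
    rw [ZMod.card, hdeg, hn, Nat.sub_add_cancel Nat.one_le_two_pow]
  have hgmonic := monic_of_mul_eq_X_pow_sub_one hn0 hmonic hg
  set w : Fin n → ZMod 2 := fun i => g.coeff i
  have hw : wordPoly w = g :=
    wordPoly_coeff_eq_of_mul_eq_X_pow_sub_one hn0 hmonic (by omega) hg
  have hw0 : w ≠ 0 := fun h => hgmonic.ne_zero (by rw [← hw, h, wordPoly_zero])
  have hinj := cshift_iterate_injOn_of_orderOf_root hg hgmonic.ne_zero hw hprim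
  have hXeq := eq_union_orbit_of_orderOf_root hn0 hcard hmonic hprim hg hX hw
  have hadd : ∀ u ∈ X, ∀ v ∈ X, u + v ∈ X := fun u hu v hv => by
    rw [hX, wordPoly_add]; exact dvd_add ((hX u).1 hu) ((hX v).1 hv)
  have hcop : n.Coprime (hammingNorm w) := by
    have hwt := two_mul_hammingNorm_of_eq_union_orbit hn0 hadd hw0 hinj hXeq
    exact (Nat.coprime_self_add_right.2 (Nat.coprime_one_right n)).coprime_dvd_right
      ⟨2, by omega⟩
  rw [hXeq]
  exact exhibitsCSP_union (disjoint_singleton_left.2 (zero_notMem_image_cshift_iterate hw0 _))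
    (exhibitsCSP_singleton rfl (by simp [invF2]))
    (exhibitsCSP_orbit hn0 hinj (invF2_cshift_iterate_modEq w) hcop)

/-- for X = C a binary dual Hamming code of dimension k ≥ 1 and length
n = 2^k - 1 (the cyclic code over F_2 generated by g = (x^n-1)/gperp with gperp
primitive monic irreducible of degree k), the triple (X, X^inv(t), C) exhibits the
cyclic sieving phenomenon, with inv defined using the order 0 < 1 on F_2. -/
theorem stmt19 (k : ℕ) (hk : 1 ≤ k) (n : ℕ) (hn : n = 2 ^ k - 1)
    (gperp : Polynomial (ZMod 2)) (hmonic : gperp.Monic) (hirr : Irreducible gperp)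
    (hdeg : gperp.natDegree = k)
    (hprim : orderOf (AdjoinRoot.root gperp) = n)
    (g : Polynomial (ZMod 2)) (hg : g * gperp = Polynomial.X ^ n - 1)
    (X : Finset (Fin n → ZMod 2)) (hX : ∀ v : Fin n → ZMod 2, v ∈ X ↔ g ∣ wordPoly v) :
    exhibitsCSP X invF2 :=
  stmt19_general k hk n hn gperp hmonic hdeg hprim g hg X hX
end
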